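/- Fix 0 < r < 1, an integer δ, and points p_1, …, p_e ∈ 𝔸_r with |p_1 p_2 ⋯ p_e| = r^δ. Then f_∞ has no zeros or poles on the unit circle, and the winding number of f_∞ along the unit circle equals e − δ; that is, (1/(2πi)) ∮_{|z|=1} f_∞′(z)/f_∞(z) dz = e − δ. -/

import Mathlib

/-!
Every partial product `f_N` is `z ^ (-δ)` times a finite product of normalized Blaschke factors
`c_a (z - a) / (1 - conj a * z)` with zeros `a = p k * r ^ (2 * j)`. Such a factor has modulus one
on the unit circle, and its logarithmic derivative `(z - a)⁻¹ - (z - (conj a)⁻¹)⁻¹` integrates to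
`2πi` or `-2πi` according as `‖a‖ < 1` or `‖a‖ > 1`. As `r < ‖p k‖ < 1`, the zeros of `B_j` lie
inside the unit disc for `j ≥ 0` and outside it for `j < 0`, so the winding number of `f_N` is
`-δ + e + ∑ j, (e - e) = e - δ` for every `N`. The limit `f_∞` has modulus one on the circle, so
the logarithmic derivatives `f_N' / f_N` converge uniformly there and the winding numbers pass to
the limit.
-/

open Finset Complex Filter

/-- The Blaschke-type factor `B_j` associated to `r ∈ (0,1)` and points
`p 1, …, p e` of the annulus `𝔸_r`. -/
noncomputable def annulusBlaschkeFactor (r : ℝ) {e : ℕ} (p : Fin e → ℂ) (j : ℤ)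
    (z : ℂ) : ℂ :=
  (∏ k, (1 - (starRingEnd ℂ) (p k) * (r : ℂ) ^ (2 * j)) /
      (1 - p k * (r : ℂ) ^ (2 * j))) *
    ∏ k, (z - p k * (r : ℂ) ^ (2 * j)) /
      (1 - (starRingEnd ℂ) (p k) * (r : ℂ) ^ (2 * j) * z)

/-- The partial product `f_N(z) = z^{−δ} B₀(z) ∏_{j=1}^N B_j(z) B_{−j}(z)`. -/
noncomputable def annulusPartialProduct (r : ℝ) {e : ℕ} (p : Fin e → ℂ) (δ : ℤ)
    (N : ℕ) (z : ℂ) : ℂ :=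
  z ^ (-δ) * annulusBlaschkeFactor r p 0 z *
    ∏ j ∈ Finset.Icc 1 N, (annulusBlaschkeFactor r p (j : ℤ) z *
      annulusBlaschkeFactor r p (-(j : ℤ)) z)

open Metric Topology ComplexConjugate Real

section LogDerivOnCircle

variable {c : ℂ} {R : ℝ}

theorem circleIntegrable_logDeriv {f : ℂ → ℂ} (hR : 0 ≤ R) (hf : AnalyticOnNhd ℂ f (sphere c R))
    (hf0 : ∀ z ∈ sphere c R, f z ≠ 0) : CircleIntegrable (logDeriv f) c R :=
  (hf.deriv.continuousOn.div hf.continuousOn hf0).circleIntegrable hR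

theorem circleIntegral_logDeriv_mul {f g : ℂ → ℂ} (hR : 0 ≤ R)
    (hf : AnalyticOnNhd ℂ f (sphere c R)) (hf0 : ∀ z ∈ sphere c R, f z ≠ 0)
    (hg : AnalyticOnNhd ℂ g (sphere c R)) (hg0 : ∀ z ∈ sphere c R, g z ≠ 0) :
    (∮ z in C(c, R), logDeriv (fun w => f w * g w) z) =
      (∮ z in C(c, R), logDeriv f z) + ∮ z in C(c, R), logDeriv g z := by
  rw [← circleIntegral.integral_add (circleIntegrable_logDeriv hR hf hf0)
    (circleIntegrable_logDeriv hR hg hg0)]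
  exact circleIntegral.integral_congr hR fun z hz =>
    logDeriv_mul z (hf0 z hz) (hg0 z hz) (hf z hz).differentiableAt (hg z hz).differentiableAt

theorem circleIntegral_logDeriv_prod {ι : Type*} (s : Finset ι) {f : ι → ℂ → ℂ} (hR : 0 ≤ R)
    (hf : ∀ i ∈ s, AnalyticOnNhd ℂ (f i) (sphere c R))
    (hf0 : ∀ i ∈ s, ∀ z ∈ sphere c R, f i z ≠ 0) :
    (∮ z in C(c, R), logDeriv (fun w => ∏ i ∈ s, f i w) z) =
      ∑ i ∈ s, ∮ z in C(c, R), logDeriv (f i) z := by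
  rw [← circleIntegral.integral_fun_sum fun i hi =>
    circleIntegrable_logDeriv hR (hf i hi) (hf0 i hi)]
  exact circleIntegral.integral_congr hR fun z hz =>
    logDeriv_prod (fun i hi => hf0 i hi z hz) fun i hi => (hf i hi z hz).differentiableAt

theorem circleIntegral_sub_inv_of_notMem_closedBall {w : ℂ} (hR : 0 ≤ R)
    (hw : w ∉ closedBall c R) : (∮ z in C(c, R), (z - w)⁻¹) = 0 := by
  have hne : ∀ z ∈ closedBall c R, z - w ≠ 0 := fun z hz =>
    sub_ne_zero.2 (ne_of_mem_of_not_mem hz hw)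
  exact circleIntegral_eq_zero_of_differentiable_on_off_countable hR Set.countable_empty
    (fun z hz => ((continuousAt_id.sub continuousAt_const).inv₀ (hne z hz)).continuousWithinAt)
    fun z hz => (differentiableAt_id.sub_const w).inv (hne z (ball_subset_closedBall hz.1))

theorem circleIntegral_logDeriv_zpow (hR : 0 < R) (n : ℤ) :
    (∮ z in C(0, R), logDeriv (· ^ n) z) = 2 * π * I * n := by
  have h := circleIntegral.integral_sub_inv_of_mem_ball (mem_ball_self hR : (0 : ℂ) ∈ ball 0 R)
  simp only [sub_zero] at h
  simp_rw [logDeriv_zpow, div_eq_mul_inv, circleIntegral.integral_const_mul, h]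
  ring

theorem continuousOn_logDeriv {U K : Set ℂ} (hU : IsOpen U) (hKU : K ⊆ U) {f : ℂ → ℂ}
    (hf : DifferentiableOn ℂ f U) (hf0 : ∀ z ∈ K, f z ≠ 0) : ContinuousOn (logDeriv f) K :=
  ((hf.analyticOnNhd hU).deriv.continuousOn.mono hKU).div (hf.continuousOn.mono hKU) hf0

theorem tendsto_circleIntegral_logDeriv {ι : Type*} {l : Filter ι} [l.NeBot]
    [l.IsCountablyGenerated] {U : Set ℂ} (hU : IsOpen U) (hR : 0 ≤ R) (hUc : sphere c R ⊆ U)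
    {F : ι → ℂ → ℂ} {f : ℂ → ℂ} (hF : ∀ᶠ n in l, DifferentiableOn ℂ (F n) U)
    (hFf : TendstoLocallyUniformlyOn F f l U) (hF0 : ∀ᶠ n in l, ∀ z ∈ sphere c R, F n z ≠ 0)
    (hf0 : ∀ z ∈ sphere c R, f z ≠ 0) :
    Tendsto (fun n => ∮ z in C(c, R), logDeriv (F n) z) l (𝓝 (∮ z in C(c, R), logDeriv f z)) := by
  have hf : DifferentiableOn ℂ f U := hFf.differentiableOn hF hU
  have hlog : TendstoLocallyUniformlyOn (fun n => logDeriv (F n)) (logDeriv f) l (sphere c R) :=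
    ((hFf.deriv hF hU).mono hUc).div₀ (hFf.mono hUc)
      ((hf.analyticOnNhd hU).deriv.continuousOn.mono hUc) (hf.continuousOn.mono hUc) hf0
  refine ((tendstoLocallyUniformlyOn_iff_tendstoUniformlyOn_of_compact (isCompact_sphere c R)).1
    hlog).tendsto_circleIntegral_of_continuousOn hR ?_
  filter_upwards [hF, hF0] with n hFn hFn0
  exact continuousOn_logDeriv hU hUc hFn hFn0

end LogDerivOnCircle

-- normalized so that `blaschkeFactor a 1 = 1`
noncomputable def blaschkeFactor (a z : ℂ) : ℂ :=
  (1 - conj a) / (1 - a) * ((z - a) / (1 - conj a * z))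

section BlaschkeFactor

variable {a z : ℂ}

theorem norm_one_sub_conj (a : ℂ) : ‖1 - conj a‖ = ‖1 - a‖ := by
  rw [← norm_conj, map_sub, map_one, conj_conj]

theorem one_sub_ne_zero_of_norm_ne_one (ha : ‖a‖ ≠ 1) : 1 - a ≠ 0 := by
  rw [sub_ne_zero]; rintro rfl; simp at ha

theorem one_sub_conj_mul_ne_zero (ha : ‖a‖ ≠ 1) (hz : ‖z‖ = 1) : 1 - conj a * z ≠ 0 := by
  rw [sub_ne_zero, ne_comm]
  contrapose! ha
  simpa [hz] using congrArg norm ha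

theorem analyticAt_blaschkeFactor (h : 1 - conj a * z ≠ 0) :
    AnalyticAt ℂ (blaschkeFactor a) z := by
  unfold blaschkeFactor
  fun_prop (disch := assumption)

theorem norm_blaschkeFactor (ha : ‖a‖ ≠ 1) (hz : ‖z‖ = 1) : ‖blaschkeFactor a z‖ = 1 := by
  have h1a := one_sub_ne_zero_of_norm_ne_one ha
  have hza : z - a ≠ 0 := by
    rw [sub_ne_zero]; rintro rfl; exact ha hz
  -- on the unit circle `1 = conj z * z`, so `1 - conj a * z = conj (z - a) * z`
  have hden : 1 - conj a * z = conj (z - a) * z := by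
    rw [map_sub, sub_mul, conj_mul', hz]; simp
  rw [blaschkeFactor, hden, norm_mul, norm_div, norm_div, norm_one_sub_conj, norm_mul,
    norm_conj, hz, mul_one, div_self (norm_ne_zero_iff.2 h1a),
    div_self (norm_ne_zero_iff.2 hza), one_mul]

theorem logDeriv_blaschkeFactor (ha0 : a ≠ 0) (ha : ‖a‖ ≠ 1) (hz : z ≠ a)
    (hden : 1 - conj a * z ≠ 0) :
    logDeriv (blaschkeFactor a) z = (z - a)⁻¹ - (z - (conj a)⁻¹)⁻¹ := by
  have h1a := one_sub_ne_zero_of_norm_ne_one ha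
  have hC : (1 - conj a) / (1 - a) ≠ 0 :=
    div_ne_zero (by rw [← norm_ne_zero_iff, norm_one_sub_conj, norm_ne_zero_iff]; exact h1a) h1a
  have hca : conj a ≠ 0 := by simpa using ha0
  have hpole : 1 - conj a * z = -conj a * (z - (conj a)⁻¹) := by field_simp; ring
  unfold blaschkeFactor
  rw [logDeriv_const_mul z _ hC,
    logDeriv_div (f := fun w => w - a) (g := fun w => 1 - conj a * w) z (sub_ne_zero.2 hz) hden
      (by fun_prop) (by fun_prop)]
  have hnum : logDeriv (fun w => w - a) z = (z - a)⁻¹ := by simp [logDeriv_apply]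
  have hden' : logDeriv (fun w => 1 - conj a * w) z = -conj a / (1 - conj a * z) := by
    simp [logDeriv_apply]
  rw [hnum, hden', hpole]
  field_simp

theorem circleIntegral_logDeriv_blaschkeFactor (ha0 : a ≠ 0) (ha : ‖a‖ ≠ 1) :
    (∮ z in C(0, 1), logDeriv (blaschkeFactor a) z) = 2 * π * I * if ‖a‖ < 1 then 1 else -1 := by
  have hb : ‖(conj a)⁻¹‖ = ‖a‖⁻¹ := by simp
  have hint : ∀ w : ℂ, ‖w‖ ≠ 1 → CircleIntegrable (fun z => (z - w)⁻¹) 0 1 := fun w hw => by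
    simpa using hw
  rw [circleIntegral.integral_congr zero_le_one fun z hz => logDeriv_blaschkeFactor ha0 ha
      (by rintro rfl; exact ha (by simpa using hz))
      (one_sub_conj_mul_ne_zero ha (by simpa using hz)),
    circleIntegral.integral_sub (hint a ha) (hint _ (by rwa [hb, ne_eq, inv_eq_one]))]
  rcases ha.lt_or_gt with h | h
  · have hb1 : 1 < ‖(conj a)⁻¹‖ := by rw [hb]; exact one_lt_inv₀ (norm_pos_iff.2 ha0) |>.2 h
    rw [circleIntegral.integral_sub_inv_of_mem_ball (by simpa using h),
      circleIntegral_sub_inv_of_notMem_closedBall zero_le_one (by simpa using hb1), if_pos h]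
    ring
  · have hb1 : ‖(conj a)⁻¹‖ < 1 := by rw [hb]; exact inv_lt_one_of_one_lt₀ h
    rw [circleIntegral_sub_inv_of_notMem_closedBall zero_le_one (by simpa using h),
      circleIntegral.integral_sub_inv_of_mem_ball (by simpa using hb1), if_neg h.not_gt]
    ring

end BlaschkeFactor

section Annulus

variable {r : ℝ} {e : ℕ} {p : Fin e → ℂ} {q z : ℂ} {j : ℤ}

theorem norm_mul_ofReal_zpow (hr : 0 ≤ r) (q : ℂ) (n : ℤ) :
    ‖q * (r : ℂ) ^ n‖ = ‖q‖ * r ^ n := by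
  rw [norm_mul, norm_zpow, norm_real, Real.norm_of_nonneg hr]

theorem conj_mul_ofReal_zpow (q : ℂ) (r : ℝ) (n : ℤ) :
    conj (q * (r : ℂ) ^ n) = conj q * (r : ℂ) ^ n := by
  rw [map_mul, map_zpow₀, conj_ofReal]

theorem norm_mul_zpow_two_mul_lt_one (hr0 : 0 < r) (hr1 : r < 1) (hq : ‖q‖ < 1) (hj : 0 ≤ j) :
    ‖q * (r : ℂ) ^ (2 * j)‖ < 1 := by
  rw [norm_mul_ofReal_zpow hr0.le]
  calc ‖q‖ * r ^ (2 * j) ≤ ‖q‖ * 1 := by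
        gcongr
        exact zpow_le_one₀ hr0 hr1.le (by omega)
    _ < 1 := by simpa using hq

theorem one_lt_norm_mul_zpow_two_mul (hr0 : 0 < r) (hr1 : r < 1) (hq : r < ‖q‖) (hj : j < 0) :
    1 < ‖q * (r : ℂ) ^ (2 * j)‖ := by
  rw [norm_mul_ofReal_zpow hr0.le]
  calc (1 : ℝ) = r * r ^ (-1 : ℤ) := by rw [zpow_neg_one, mul_inv_cancel₀ hr0.ne']
    _ ≤ r * r ^ (2 * j) := mul_le_mul_of_nonneg_left
        (zpow_le_zpow_right_of_le_one₀ hr0 hr1.le (by omega)) hr0.le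
    _ < ‖q‖ * r ^ (2 * j) := by gcongr

theorem norm_mul_zpow_two_mul_ne_one (hr0 : 0 < r) (hr1 : r < 1) (hq : r < ‖q‖ ∧ ‖q‖ < 1)
    (j : ℤ) : ‖q * (r : ℂ) ^ (2 * j)‖ ≠ 1 := by
  rcases le_or_gt 0 j with hj | hj
  · exact (norm_mul_zpow_two_mul_lt_one hr0 hr1 hq.2 hj).ne
  · exact (one_lt_norm_mul_zpow_two_mul hr0 hr1 hq.1 hj).ne'

theorem circleIntegral_logDeriv_blaschkeFactor_mul_zpow_two_mul (hr0 : 0 < r) (hr1 : r < 1)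
    (hq : r < ‖q‖ ∧ ‖q‖ < 1) (j : ℤ) :
    (∮ z in C(0, 1), logDeriv (blaschkeFactor (q * (r : ℂ) ^ (2 * j))) z) =
      2 * π * I * if 0 ≤ j then 1 else -1 := by
  have hq0 : q * (r : ℂ) ^ (2 * j) ≠ 0 :=
    mul_ne_zero (norm_pos_iff.1 (hr0.trans hq.1)) (zpow_ne_zero _ (ofReal_ne_zero.2 hr0.ne'))
  rw [circleIntegral_logDeriv_blaschkeFactor hq0 (norm_mul_zpow_two_mul_ne_one hr0 hr1 hq j)]
  rcases le_or_gt 0 j with hj | hj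
  · rw [if_pos (norm_mul_zpow_two_mul_lt_one hr0 hr1 hq.2 hj), if_pos hj]
  · rw [if_neg (one_lt_norm_mul_zpow_two_mul hr0 hr1 hq.1 hj).not_gt, if_neg hj.not_ge]

theorem annulusBlaschkeFactor_eq_prod (r : ℝ) (p : Fin e → ℂ) (j : ℤ) :
    annulusBlaschkeFactor r p j = fun z => ∏ k, blaschkeFactor (p k * (r : ℂ) ^ (2 * j)) z := by
  funext z
  simp only [annulusBlaschkeFactor, blaschkeFactor, Finset.prod_mul_distrib, conj_mul_ofReal_zpow]

theorem analyticAt_annulusBlaschkeFactor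
    (hden : ∀ k, 1 - conj (p k) * (r : ℂ) ^ (2 * j) * z ≠ 0) :
    AnalyticAt ℂ (annulusBlaschkeFactor r p j) z := by
  rw [annulusBlaschkeFactor_eq_prod]
  refine Finset.analyticAt_fun_prod _ fun k _ => analyticAt_blaschkeFactor ?_
  rw [conj_mul_ofReal_zpow]
  exact hden k

theorem analyticOnNhd_annulusBlaschkeFactor (hr0 : 0 < r) (hr1 : r < 1)
    (hp : ∀ k, r < ‖p k‖ ∧ ‖p k‖ < 1) (j : ℤ) :
    AnalyticOnNhd ℂ (annulusBlaschkeFactor r p j) (sphere 0 1) := fun z hz =>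
  analyticAt_annulusBlaschkeFactor fun k => by
    rw [← conj_mul_ofReal_zpow]
    exact one_sub_conj_mul_ne_zero (norm_mul_zpow_two_mul_ne_one hr0 hr1 (hp k) j)
      (by simpa using hz)

theorem norm_annulusBlaschkeFactor (hr0 : 0 < r) (hr1 : r < 1)
    (hp : ∀ k, r < ‖p k‖ ∧ ‖p k‖ < 1) (j : ℤ) (hz : ‖z‖ = 1) :
    ‖annulusBlaschkeFactor r p j z‖ = 1 := by
  rw [annulusBlaschkeFactor_eq_prod, norm_prod]
  exact Finset.prod_eq_one fun k _ =>
    norm_blaschkeFactor (norm_mul_zpow_two_mul_ne_one hr0 hr1 (hp k) j) hz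

theorem annulusBlaschkeFactor_ne_zero (hr0 : 0 < r) (hr1 : r < 1)
    (hp : ∀ k, r < ‖p k‖ ∧ ‖p k‖ < 1) (j : ℤ) :
    ∀ z ∈ sphere (0 : ℂ) 1, annulusBlaschkeFactor r p j z ≠ 0 := fun z hz =>
  ne_zero_of_norm_ne_zero (by simp [norm_annulusBlaschkeFactor hr0 hr1 hp j (by simpa using hz)])

theorem circleIntegral_logDeriv_annulusBlaschkeFactor (hr0 : 0 < r) (hr1 : r < 1)
    (hp : ∀ k, r < ‖p k‖ ∧ ‖p k‖ < 1) (j : ℤ) :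
    (∮ z in C(0, 1), logDeriv (annulusBlaschkeFactor r p j) z) =
      2 * π * I * if 0 ≤ j then (e : ℂ) else -e := by
  have hne k := norm_mul_zpow_two_mul_ne_one hr0 hr1 (hp k) j
  rw [annulusBlaschkeFactor_eq_prod, circleIntegral_logDeriv_prod _ zero_le_one
      (fun k _ z hz => analyticAt_blaschkeFactor
        (one_sub_conj_mul_ne_zero (hne k) (by simpa using hz)))
      (fun k _ z hz => ne_zero_of_norm_ne_zero
        (by simp [norm_blaschkeFactor (hne k) (by simpa using hz)])),
    Finset.sum_congr rfl fun k _ =>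
      circleIntegral_logDeriv_blaschkeFactor_mul_zpow_two_mul hr0 hr1 (hp k) j]
  split_ifs <;> simp <;> ring

theorem circleIntegral_logDeriv_annulusBlaschkeFactor_mul_neg (hr0 : 0 < r) (hr1 : r < 1)
    (hp : ∀ k, r < ‖p k‖ ∧ ‖p k‖ < 1) {j : ℤ} (hj : 0 < j) :
    (∮ z in C(0, 1), logDeriv
      (fun z => annulusBlaschkeFactor r p j z * annulusBlaschkeFactor r p (-j) z) z) = 0 := by
  have hB := analyticOnNhd_annulusBlaschkeFactor hr0 hr1 hp
  have hB0 := annulusBlaschkeFactor_ne_zero hr0 hr1 hp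
  rw [circleIntegral_logDeriv_mul zero_le_one (hB _) (hB0 _) (hB _) (hB0 _),
    circleIntegral_logDeriv_annulusBlaschkeFactor hr0 hr1 hp,
    circleIntegral_logDeriv_annulusBlaschkeFactor hr0 hr1 hp, if_pos hj.le, if_neg (by omega)]
  ring

theorem analyticAt_annulusPartialProduct (δ : ℤ) (N : ℕ) (hz0 : z ≠ 0)
    (hden : ∀ (j : ℤ) (k : Fin e), 1 - conj (p k) * (r : ℂ) ^ (2 * j) * z ≠ 0) :
    AnalyticAt ℂ (annulusPartialProduct r p δ N) z :=
  ((analyticAt_id.zpow hz0).mul (analyticAt_annulusBlaschkeFactor (hden 0))).mul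
    (Finset.analyticAt_fun_prod _ fun _ _ =>
      (analyticAt_annulusBlaschkeFactor (hden _)).mul (analyticAt_annulusBlaschkeFactor (hden _)))

theorem norm_annulusPartialProduct (hr0 : 0 < r) (hr1 : r < 1)
    (hp : ∀ k, r < ‖p k‖ ∧ ‖p k‖ < 1) (δ : ℤ) (N : ℕ) (hz : ‖z‖ = 1) :
    ‖annulusPartialProduct r p δ N z‖ = 1 := by
  simp [annulusPartialProduct, norm_prod, hz, norm_annulusBlaschkeFactor hr0 hr1 hp _ hz]

theorem circleIntegral_logDeriv_annulusPartialProduct (hr0 : 0 < r) (hr1 : r < 1)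
    (hp : ∀ k, r < ‖p k‖ ∧ ‖p k‖ < 1) (δ : ℤ) (N : ℕ) :
    (∮ z in C(0, 1), logDeriv (annulusPartialProduct r p δ N) z) = 2 * π * I * (e - δ) := by
  have hB := analyticOnNhd_annulusBlaschkeFactor hr0 hr1 hp
  have hB0 := annulusBlaschkeFactor_ne_zero hr0 hr1 hp
  have hz0 {z : ℂ} (hz : z ∈ sphere (0 : ℂ) 1) : z ≠ 0 := ne_zero_of_mem_sphere one_ne_zero ⟨z, hz⟩
  have hpow : AnalyticOnNhd ℂ (· ^ (-δ)) (sphere (0 : ℂ) 1) := fun z hz =>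
    analyticAt_id.zpow (hz0 hz)
  have hpow0 : ∀ z ∈ sphere (0 : ℂ) 1, z ^ (-δ) ≠ 0 := fun z hz => zpow_ne_zero _ (hz0 hz)
  have hpair (j : ℕ) := (hB j).mul (hB (-j))
  have hpair0 (j : ℕ) : ∀ z ∈ sphere (0 : ℂ) 1,
      annulusBlaschkeFactor r p j z * annulusBlaschkeFactor r p (-j) z ≠ 0 := fun z hz =>
    mul_ne_zero (hB0 _ z hz) (hB0 _ z hz)
  change (∮ z in C(0, 1), logDeriv (fun w => (w ^ (-δ) * annulusBlaschkeFactor r p 0 w) *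
      ∏ j ∈ Finset.Icc 1 N, (annulusBlaschkeFactor r p j w * annulusBlaschkeFactor r p (-j) w))
      z) = _
  rw [circleIntegral_logDeriv_mul zero_le_one (hpow.mul (hB 0))
      (fun z hz => mul_ne_zero (hpow0 z hz) (hB0 0 z hz))
      (Finset.analyticOnNhd_fun_prod _ fun j _ => hpair j)
      (fun z hz => Finset.prod_ne_zero_iff.2 fun j _ => hpair0 j z hz),
    circleIntegral_logDeriv_mul zero_le_one hpow hpow0 (hB 0) (hB0 0),
    circleIntegral_logDeriv_prod _ zero_le_one (fun j _ => hpair j) (fun j _ => hpair0 j),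
    Finset.sum_eq_zero fun j hj => circleIntegral_logDeriv_annulusBlaschkeFactor_mul_neg hr0 hr1 hp
      (by have := (Finset.mem_Icc.1 hj).1; omega),
    circleIntegral_logDeriv_zpow one_pos, circleIntegral_logDeriv_annulusBlaschkeFactor hr0 hr1 hp,
    if_pos le_rfl]
  push_cast
  ring

end Annulus

theorem annulusInfiniteProduct_winding_number_general (r : ℝ) (hr0 : 0 < r) (hr1 : r < 1)
    (e : ℕ) (p : Fin e → ℂ)
    (hp : ∀ k, r < ‖p k‖ ∧ ‖p k‖ < 1) (δ : ℤ)
    (U : Set ℂ) (hUopen : IsOpen U) (hUcirc : Metric.sphere (0 : ℂ) 1 ⊆ U)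
    (hU0 : (0 : ℂ) ∉ U)
    (hUpoles : ∀ z ∈ U, ∀ (j : ℤ) (k : Fin e),
      1 - (starRingEnd ℂ) (p k) * (r : ℂ) ^ (2 * j) * z ≠ 0)
    (finf : ℂ → ℂ)
    (hconv : TendstoLocallyUniformlyOn
      (fun N z => annulusPartialProduct r p δ N z) finf atTop U) :
    (∀ z ∈ Metric.sphere (0 : ℂ) 1, AnalyticAt ℂ finf z ∧ finf z ≠ 0) ∧
    (∮ z in C(0, 1), deriv finf z / finf z) =
      2 * Real.pi * Complex.I * ((e : ℂ) - (δ : ℂ)) := by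
  have hdiff N : DifferentiableOn ℂ (annulusPartialProduct r p δ N) U := fun z hz =>
    (analyticAt_annulusPartialProduct δ N (ne_of_mem_of_not_mem hz hU0)
      (hUpoles z hz)).differentiableAt.differentiableWithinAt
  have hnorm N : ∀ z ∈ sphere (0 : ℂ) 1, ‖annulusPartialProduct r p δ N z‖ = 1 := fun z hz =>
    norm_annulusPartialProduct hr0 hr1 hp δ N (by simpa using hz)
  have hf0 : ∀ z ∈ sphere (0 : ℂ) 1, finf z ≠ 0 := fun z hz =>
    ne_zero_of_norm_ne_zero <| by
      rw [tendsto_nhds_unique (hconv.tendsto_at (hUcirc hz)).norm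
        (tendsto_const_nhds.congr fun N => (hnorm N z hz).symm)]
      exact one_ne_zero
  refine ⟨fun z hz => ⟨(hconv.differentiableOn (.of_forall hdiff) hUopen).analyticAt
    (hUopen.mem_nhds (hUcirc hz)), hf0 z hz⟩, ?_⟩
  refine tendsto_nhds_unique (tendsto_circleIntegral_logDeriv hUopen zero_le_one hUcirc
    (.of_forall hdiff) hconv
    (.of_forall fun N z hz => ne_zero_of_norm_ne_zero (by simp [hnorm N z hz])) hf0) ?_
  simp_rw [circleIntegral_logDeriv_annulusPartialProduct hr0 hr1 hp]
  exact tendsto_const_nhds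

/-- Let `0 < r < 1`, `δ ∈ ℤ`, and `p₁, …, p_e ∈ 𝔸_r` with
`|p₁ ⋯ p_e| = r^δ`.  Let `f_∞` be the limit of the partial products `f_N`,
the convergence being locally uniform on an open neighborhood `U` of the unit
circle avoiding `0` and the poles of the factors.  Then `f_∞` has no zeros or
poles on the unit circle (it is analytic and nonvanishing there), and its
winding number along the positively oriented unit circle equals `e − δ`:
`(1/(2πi)) ∮_{|z|=1} f_∞′(z)/f_∞(z) dz = e − δ`. -/
theorem annulusInfiniteProduct_winding_number (r : ℝ) (hr0 : 0 < r) (hr1 : r < 1)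
    (e : ℕ) (p : Fin e → ℂ)
    (hp : ∀ k, r < ‖p k‖ ∧ ‖p k‖ < 1) (δ : ℤ)
    (hprod : ‖∏ k, p k‖ = r ^ δ)
    (U : Set ℂ) (hUopen : IsOpen U) (hUcirc : Metric.sphere (0 : ℂ) 1 ⊆ U)
    (hU0 : (0 : ℂ) ∉ U)
    (hUpoles : ∀ z ∈ U, ∀ (j : ℤ) (k : Fin e),
      1 - (starRingEnd ℂ) (p k) * (r : ℂ) ^ (2 * j) * z ≠ 0)
    (finf : ℂ → ℂ)
    (hconv : TendstoLocallyUniformlyOn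
      (fun N z => annulusPartialProduct r p δ N z) finf atTop U) :
    (∀ z ∈ Metric.sphere (0 : ℂ) 1, AnalyticAt ℂ finf z ∧ finf z ≠ 0) ∧
    (∮ z in C(0, 1), deriv finf z / finf z) =
      2 * Real.pi * Complex.I * ((e : ℂ) - (δ : ℂ)) :=
  annulusInfiniteProduct_winding_number_general r hr0 hr1 e p hp δ U hUopen hUcirc hU0 hUpoles finf
    hconv
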